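/- arXiv:2507.09197 — 4 statements merged into one kernel-verified Lean document; each statement's English description precedes it below -/
import Mathlib

section
/- Let f(z,w) = (z^d, w^c + z·h(z,w)) be holomorphic near 0 ∈ ℂ² with 2 ≤ c < d, ‖h‖ < 1/2, h(0,0)=0, and write f^n(z,w) = (z_n, w_n). For (z,w) in the forward-invariant region Ω₀ = {|z| < |w|^c} (inside a small polydisk), the sequence g_n(z,w) = c^{-n} log|w_n| satisfies |g_{n+1} - g_n| ≤ (log 2)/c^n, and hence converges uniformly on Ω₀ to a limit function g with g ∘ f = c·g on Ω₀. -/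
open Filter

/-- Let `f(z,w) = (z^d, w^c + z·h(z,w))` be holomorphic near `0 ∈ ℂ²` with
`2 ≤ c < d`, `‖h‖ < 1/2`, `h(0,0) = 0`, and write `f^n(z,w) = (z_n, w_n)`.  For `(z,w)` in the
forward-invariant region `Ω₀ = {|z| < |w|^c}` (inside a small polydisk), the sequence
`g_n(z,w) = c^{-n} log|w_n|` satisfies `|g_{n+1} - g_n| ≤ (log 2)/c^n`, and hence converges
uniformly on `Ω₀` to a limit function `g` with `g ∘ f = c·g` on `Ω₀`. -/
theorem stmt_3 (c d : ℕ) (hc : 2 ≤ c) (hcd : c < d)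
    (r : ℝ) (hr0 : 0 < r) (hr : r < 1 / 2)
    (h : ℂ × ℂ → ℂ)
    (hhol : AnalyticOnNhd ℂ h {p : ℂ × ℂ | ‖p.1‖ < r ∧ ‖p.2‖ < r})
    (hbd : ∀ p : ℂ × ℂ, ‖p.1‖ < r → ‖p.2‖ < r →
      ‖h p‖ < 1 / 2)
    (h00 : h (0, 0) = 0)
    (f : ℂ × ℂ → ℂ × ℂ)
    (hf : ∀ p : ℂ × ℂ, f p = (p.1 ^ d, p.2 ^ c + p.1 * h p))
    (Ω₀ : Set (ℂ × ℂ))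
    (hΩ : Ω₀ = {p : ℂ × ℂ | ‖p.1‖ < r ∧ ‖p.2‖ < r ∧
      ‖p.1‖ < ‖p.2‖ ^ c}) :
    (∀ p ∈ Ω₀, ∀ n : ℕ,
      |(1 / (c : ℝ) ^ (n + 1)) * Real.log (‖(f^[n + 1] p).2‖) -
          (1 / (c : ℝ) ^ n) * Real.log (‖(f^[n] p).2‖)| ≤
        Real.log 2 / (c : ℝ) ^ n) ∧
    ∃ g : ℂ × ℂ → ℝ,
      TendstoUniformlyOn
        (fun (n : ℕ) (p : ℂ × ℂ) => (1 / (c : ℝ) ^ n) * Real.log (‖(f^[n] p).2‖))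
        g atTop Ω₀ ∧
      ∀ p ∈ Ω₀, g (f p) = (c : ℝ) * g p := by
  have hc0 : (0 : ℝ) < c := by positivity
  have hc1 : (1 : ℝ) ≤ c := by exact_mod_cast Nat.one_le_of_lt hc
  have hcne : (c : ℝ) ≠ 0 := ne_of_gt hc0
  have hcn : c ≠ 0 := by omega
  have hdn : d ≠ 0 := by omega
  -- Key step: Ω₀ is forward invariant and one step changes log|w| in a controlled way
  have key : ∀ p ∈ Ω₀, f p ∈ Ω₀ ∧
      |Real.log (‖(f p).2‖) - c * Real.log (‖p.2‖)| ≤ Real.log 2 := by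
    rintro ⟨z, w⟩ hp
    rw [hΩ] at hp
    obtain ⟨hz, hw, hzw⟩ := hp
    simp only at hz hw hzw
    have hzn : 0 ≤ ‖z‖ := norm_nonneg z
    set A : ℝ := ‖w‖ ^ c with hAdef
    have hA : 0 < A := lt_of_le_of_lt hzn hzw
    have hw0 : 0 < ‖w‖ := by
      by_contra hcon
      push_neg at hcon
      have : ‖w‖ = 0 := le_antisymm hcon (norm_nonneg w)
      rw [hAdef, this, zero_pow hcn] at hA
      exact lt_irrefl 0 hA
    have hzhalf : ‖z * h (z, w)‖ < A / 2 := by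
      have h1 : ‖z * h (z, w)‖ ≤ ‖z‖ * (1 / 2) := by
        rw [norm_mul]
        exact mul_le_mul_of_nonneg_left (hbd (z, w) hz hw).le hzn
      have h2 : ‖z‖ * (1 / 2) < A * (1 / 2) :=
        mul_lt_mul_of_pos_right hzw (by norm_num)
      calc ‖z * h (z, w)‖ ≤ ‖z‖ * (1 / 2) := h1
        _ < A * (1 / 2) := h2
        _ = A / 2 := by ring
    have hAeq : ‖w ^ c‖ = A := by rw [norm_pow]
    have hup : ‖(f (z, w)).2‖ < 3 * A / 2 := by
      rw [hf]
      simp only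
      calc ‖w ^ c + z * h (z, w)‖
          ≤ ‖w ^ c‖ + ‖z * h (z, w)‖ := norm_add_le _ _
        _ < A + A / 2 := by rw [hAeq]; linarith
        _ = 3 * A / 2 := by ring
    have hlo : A / 2 < ‖(f (z, w)).2‖ := by
      rw [hf]
      simp only
      have : ‖w ^ c‖ ≤ ‖w ^ c + z * h (z, w)‖ +
          ‖z * h (z, w)‖ := by
        calc ‖w ^ c‖ = ‖(w ^ c + z * h (z, w)) - z * h (z, w)‖ := by
              ring_nf
          _ ≤ _ := norm_sub_le _ _
      rw [hAeq] at this
      linarith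
    have hw1pos : 0 < ‖(f (z, w)).2‖ := lt_trans (by linarith) hlo
    have hlogA : Real.log A = c * Real.log (‖w‖) := by rw [hAdef]; exact Real.log_pow _ c
    have hlog2 : (0:ℝ) < Real.log 2 := Real.log_pos (by norm_num)
    constructor
    · -- forward invariance
      rw [hΩ]
      have hz1 : ‖(f (z, w)).1‖ = ‖z‖ ^ d := by rw [hf]; simp [norm_pow]
      have hzle1 : ‖z‖ ≤ 1 := le_trans hz.le (by linarith)
      have hwle1 : ‖w‖ ≤ 1 := le_trans hw.le (by linarith)
      have hAle1 : A ≤ 1 := pow_le_one₀ hw0.le hwle1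
      refine ⟨?_, ?_, ?_⟩
      · -- |z^d| < r
        show ‖(f (z, w)).1‖ < r
        rw [hz1]
        calc ‖z‖ ^ d ≤ ‖z‖ := pow_le_of_le_one hzn hzle1 hdn
          _ < r := hz
      · -- |w₁| < r
        show ‖(f (z, w)).2‖ < r
        have hAsq : A ≤ ‖w‖ ^ 2 := pow_le_pow_of_le_one hw0.le hwle1 hc
        have hwr : ‖w‖ ^ 2 < r ^ 2 := by
          apply pow_lt_pow_left₀ hw hw0.le
          norm_num
        nlinarith
      · -- |z^d| < |w₁|^c
        show ‖(f (z, w)).1‖ < ‖(f (z, w)).2‖ ^ c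
        rw [hz1]
        have h1 : ‖z‖ ^ d < A ^ d := pow_lt_pow_left₀ hzw hzn hdn
        have h2 : A ^ d = A ^ c * A ^ (d - c) := by
          rw [← pow_add]
          congr 1
          omega
        have h3 : A ^ (d - c) ≤ A := pow_le_of_le_one hA.le hAle1 (by omega)
        have h4 : A < (1 / 2 : ℝ) ^ c := by
          have : A < r ^ c := pow_lt_pow_left₀ hw hw0.le hcn
          have : r ^ c < (1 / 2 : ℝ) ^ c := pow_lt_pow_left₀ hr hr0.le hcn
          linarith [pow_lt_pow_left₀ hw hw0.le hcn]
        have h5 : A ^ c * A ^ (d - c) < A ^ c * ((1 / 2 : ℝ) ^ c) := by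
          apply mul_lt_mul_of_pos_left (lt_of_le_of_lt h3 h4) (pow_pos hA c)
        have h6 : A ^ c * ((1 / 2 : ℝ) ^ c) = (A / 2) ^ c := by
          rw [← mul_pow]; ring_nf
        have h7 : (A / 2) ^ c < ‖(f (z, w)).2‖ ^ c :=
          pow_lt_pow_left₀ hlo (by linarith) hcn
        calc ‖z‖ ^ d < A ^ d := h1
          _ = A ^ c * A ^ (d - c) := h2
          _ < (A / 2) ^ c := by rw [← h6]; exact h5
          _ < _ := h7
    · -- log estimate
      have hub : Real.log (‖(f (z, w)).2‖) ≤ Real.log 2 + Real.log A := by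
        calc Real.log (‖(f (z, w)).2‖) ≤ Real.log (2 * A) :=
              Real.log_le_log hw1pos (by linarith)
          _ = Real.log 2 + Real.log A := Real.log_mul (by norm_num) hA.ne'
      have hlb : Real.log A - Real.log 2 ≤ Real.log (‖(f (z, w)).2‖) := by
        have := Real.log_le_log (by positivity : (0:ℝ) < A / 2) hlo.le
        rw [Real.log_div hA.ne' (by norm_num)] at this
        linarith
      rw [← hlogA]
      rw [abs_le]
      constructor <;> linarith
  -- iterates stay in Ω₀
  have iter : ∀ p ∈ Ω₀, ∀ n : ℕ, f^[n] p ∈ Ω₀ := by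
    intro p hp n
    induction n with
    | zero => simpa using hp
    | succ n ih =>
      rw [Function.iterate_succ_apply']
      exact (key _ ih).1
  -- the difference estimate (sharp version)
  have hdiff : ∀ p ∈ Ω₀, ∀ n : ℕ,
      |(1 / (c : ℝ) ^ (n + 1)) * Real.log (‖(f^[n + 1] p).2‖) -
          (1 / (c : ℝ) ^ n) * Real.log (‖(f^[n] p).2‖)| ≤
        Real.log 2 / (c : ℝ) ^ (n + 1) := by
    intro p hp n
    have hq := iter p hp n
    have hkey := (key _ hq).2
    have heq : (1 / (c : ℝ) ^ (n + 1)) * Real.log (‖(f^[n + 1] p).2‖) -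
        (1 / (c : ℝ) ^ n) * Real.log (‖(f^[n] p).2‖) =
        (1 / (c : ℝ) ^ (n + 1)) * (Real.log (‖(f (f^[n] p)).2‖) -
          c * Real.log (‖(f^[n] p).2‖)) := by
      rw [Function.iterate_succ_apply']
      field_simp
      ring
    rw [heq, abs_mul, abs_of_pos (by positivity : (0:ℝ) < 1 / (c : ℝ) ^ (n + 1))]
    rw [div_eq_mul_inv (Real.log 2), mul_comm (Real.log 2), ← one_div]
    exact mul_le_mul_of_nonneg_left hkey (by positivity)
  have hdiff' : ∀ p ∈ Ω₀, ∀ n : ℕ,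
      |(1 / (c : ℝ) ^ (n + 1)) * Real.log (‖(f^[n + 1] p).2‖) -
          (1 / (c : ℝ) ^ n) * Real.log (‖(f^[n] p).2‖)| ≤
        Real.log 2 / (c : ℝ) ^ n := by
    intro p hp n
    refine le_trans (hdiff p hp n) ?_
    apply div_le_div_of_nonneg_left (Real.log_nonneg (by norm_num)) (by positivity)
    calc (c:ℝ) ^ n ≤ (c:ℝ) ^ (n+1) := pow_le_pow_right₀ hc1 (by omega)
      _ ≤ (c:ℝ) ^ (n+1) := le_refl _
  refine ⟨hdiff', ?_⟩
  -- uniform convergence via M-test on the telescoping series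
  set G : ℕ → ℂ × ℂ → ℝ :=
    fun n p => (1 / (c : ℝ) ^ n) * Real.log (‖(f^[n] p).2‖) with hG
  set D : ℕ → ℂ × ℂ → ℝ := fun n p => G (n + 1) p - G n p with hD
  have hsum : Summable (fun n : ℕ => Real.log 2 / (c : ℝ) ^ n) := by
    have : Summable (fun n : ℕ => Real.log 2 * (1 / (c : ℝ)) ^ n) := by
      apply Summable.mul_left
      apply summable_geometric_of_lt_one (by positivity)
      rw [div_lt_one hc0]
      exact_mod_cast hc
    convert this using 2 with n
    rw [div_pow, one_pow, div_eq_mul_inv, ← one_div, div_eq_mul_inv]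
  have hMtest : TendstoUniformlyOn
      (fun (N : ℕ) (p : ℂ × ℂ) => ∑ n ∈ Finset.range N, D n p)
      (fun p => ∑' n, D n p) atTop Ω₀ := by
    apply tendstoUniformlyOn_tsum_nat hsum
    intro n p hp
    exact hdiff' p hp n
  set g : ℂ × ℂ → ℝ := fun p => G 0 p + ∑' n, D n p with hg
  have hTU : TendstoUniformlyOn (fun n p => G n p) g atTop Ω₀ := by
    have hconst : TendstoUniformlyOn (fun (_ : ℕ) (p : ℂ × ℂ) => G 0 p)
        (fun p => G 0 p) atTop Ω₀ := by
      intro u hu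
      filter_upwards with n p _
      exact mem_uniformity_of_eq hu rfl
    have hadd := hconst.add hMtest
    apply hadd.congr
    filter_upwards with N
    intro p _
    have hps : ∑ n ∈ Finset.range N, D n p = G N p - G 0 p :=
      Finset.sum_range_sub (fun n => G n p) N
    show G 0 p + ∑ n ∈ Finset.range N, D n p = G N p
    rw [hps]
    ring
  refine ⟨g, hTU, ?_⟩
  intro p hp
  have hfp : f p ∈ Ω₀ := (key p hp).1
  have h1 : Tendsto (fun n => G n (f p)) atTop (nhds (g (f p))) := hTU.tendsto_at hfp
  have h2 : Tendsto (fun n => G n p) atTop (nhds (g p)) := hTU.tendsto_at hp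
  have h3 : Tendsto (fun n => (c : ℝ) * G (n + 1) p) atTop (nhds ((c : ℝ) * g p)) := by
    apply Tendsto.const_mul
    exact h2.comp (tendsto_add_atTop_nat 1)
  have heq : ∀ n : ℕ, G n (f p) = (c : ℝ) * G (n + 1) p := by
    intro n
    rw [hG]
    simp only
    rw [← Function.iterate_succ_apply]
    field_simp
    ring
  have h1' : Tendsto (fun n => (c : ℝ) * G (n + 1) p) atTop (nhds (g (f p))) := by
    apply h1.congr
    intro n
    exact heq n
  exact tendsto_nhds_unique h1' h3
end

section
/- Let f(z,w) = (z^d, w^c + z·h(z,w)) with 2 ≤ c < d as above, and suppose a point p = (z,w) with 0 < |p| < 1 satisfies |z_n| ≥ |w_n|^c for all n ≥ 0, where f^n(p) = (z_n,w_n). Then |f^n(p)| ≤ |z|^{d^n/c} for all n ≥ 1; in particular lim_n (1/n) log|log|f^n(p)|| = log d. -/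
open Filter

/-- Let `f(z,w) = (z^d, w^c + z·h(z,w))` with `2 ≤ c < d` as above, and
suppose a point `p = (z,w)` with `0 < |p| < 1` satisfies `|z_n| ≥ |w_n|^c` for all `n ≥ 0`,
where `f^n(p) = (z_n, w_n)`.  Then `|f^n(p)| ≤ |z|^{d^n/c}` for all `n ≥ 1`; in particular
`lim_n (1/n) log|log|f^n(p)|| = log d`. -/
theorem stmt_4 (c d : ℕ) (hc : 2 ≤ c) (hcd : c < d)
    (r : ℝ) (hr0 : 0 < r) (hr : r < 1 / 2)
    (h : ℂ × ℂ → ℂ)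
    (hhol : AnalyticOnNhd ℂ h {q : ℂ × ℂ | ‖q.1‖ < r ∧ ‖q.2‖ < r})
    (hbd : ∀ q : ℂ × ℂ, ‖q.1‖ < r → ‖q.2‖ < r →
      ‖h q‖ < 1 / 2)
    (h00 : h (0, 0) = 0)
    (f : ℂ × ℂ → ℂ × ℂ)
    (hf : ∀ q : ℂ × ℂ, f q = (q.1 ^ d, q.2 ^ c + q.1 * h q))
    (p : ℂ × ℂ) (hp0 : 0 < ‖p‖) (hp1 : ‖p‖ < 1)
    (horbit : ∀ n : ℕ, ‖(f^[n] p).2‖ ^ c ≤ ‖(f^[n] p).1‖) :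
    (∀ n : ℕ, 1 ≤ n → ‖f^[n] p‖ ≤ ‖p.1‖ ^ ((d : ℝ) ^ n / (c : ℝ))) ∧
    Tendsto (fun n : ℕ => (1 / (n : ℝ)) * Real.log |Real.log ‖f^[n] p‖|)
      atTop (nhds (Real.log d)) := by
  have hc0 : (0:ℝ) < (c:ℝ) := by exact_mod_cast (by omega : 0 < c)
  have hd0 : (0:ℝ) < (d:ℝ) := by exact_mod_cast (by omega : 0 < d)
  -- p.1 ≠ 0
  have hz0 : 0 < ‖p.1‖ := by
    rcases lt_or_ge 0 (‖p.1‖) with h1 | h1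
    · exact h1
    · exfalso
      have hz : ‖p.1‖ = 0 := le_antisymm h1 (norm_nonneg _)
      have hw : ‖p.2‖ = 0 := by
        have := horbit 0
        simp only [Function.iterate_zero, id_eq, hz] at this
        have hw0 : ‖p.2‖ ^ c = 0 :=
          le_antisymm this (by positivity)
        exact pow_eq_zero_iff (by omega) |>.mp hw0
      have : ‖p‖ = 0 := by
        rw [Prod.norm_def, hz, hw]; simp
      rw [this] at hp0; exact lt_irrefl _ hp0
  have hz1 : ‖p.1‖ < 1 := by
    calc ‖p.1‖ = ‖p.1‖ := rfl
      _ ≤ ‖p‖ := norm_fst_le p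
      _ < 1 := hp1
  -- first coordinate of the iterates
  have hzn : ∀ n : ℕ, (f^[n] p).1 = p.1 ^ d ^ n := by
    intro n
    induction n with
    | zero => simp
    | succ n ih =>
      rw [Function.iterate_succ_apply', hf, ih]
      simp [← pow_mul, pow_succ]
  have hzn1 : ∀ n : ℕ, ‖(f^[n] p).1‖ = ‖p.1‖ ^ ((d:ℝ) ^ n) := by
    intro n
    rw [hzn n, norm_pow, ← Real.rpow_natCast]
    push_cast
    ring_nf
  -- upper bound, for all n
  have hbound : ∀ n : ℕ, ‖f^[n] p‖ ≤ ‖p.1‖ ^ ((d : ℝ) ^ n / (c : ℝ)) := by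
    intro n
    have hdn : (0:ℝ) < (d:ℝ) ^ n := by positivity
    have h1 : ‖(f^[n] p).1‖ ≤ ‖p.1‖ ^ ((d:ℝ) ^ n / c) := by
      rw [hzn1 n]
      exact Real.rpow_le_rpow_of_exponent_ge hz0 hz1.le
        (div_le_self hdn.le (by exact_mod_cast (by omega : 1 ≤ c)))
    have h2 : ‖(f^[n] p).2‖ ≤ ‖p.1‖ ^ ((d:ℝ) ^ n / c) := by
      set a := ‖(f^[n] p).2‖ with ha
      have ha0 : (0:ℝ) ≤ a := norm_nonneg _
      have hac : a ^ ((c:ℕ):ℝ) ≤ ‖p.1‖ ^ ((d:ℝ) ^ n) := by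
        rw [Real.rpow_natCast, ← hzn1 n]
        exact horbit n
      calc a = (a ^ ((c:ℕ):ℝ)) ^ ((c:ℝ)⁻¹) := by
              rw [← Real.rpow_mul ha0, mul_inv_cancel₀ (ne_of_gt hc0), Real.rpow_one]
        _ ≤ (‖p.1‖ ^ ((d:ℝ) ^ n)) ^ ((c:ℝ)⁻¹) :=
              Real.rpow_le_rpow (by positivity) hac (by positivity)
        _ = ‖p.1‖ ^ ((d:ℝ) ^ n / c) := by
              rw [← Real.rpow_mul hz0.le, div_eq_mul_inv]
    rw [Prod.norm_def]
    exact max_le h1 h2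
  refine ⟨fun n _ => hbound n, ?_⟩
  -- lower bound
  have hlow : ∀ n : ℕ, ‖p.1‖ ^ ((d:ℝ) ^ n) ≤ ‖f^[n] p‖ := by
    intro n
    rw [← hzn1 n]
    exact norm_fst_le (f^[n] p)
  set L : ℝ := -Real.log (‖p.1‖) with hLdef
  have hL : 0 < L := by
    have := Real.log_neg hz0 hz1
    simp [hLdef]; linarith
  have hNpos : ∀ n : ℕ, 0 < ‖f^[n] p‖ := fun n =>
    lt_of_lt_of_le (by positivity) (hlow n)
  -- key sandwich on log |log ‖f^[n] p‖| for n ≥ 1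
  have hkey : ∀ n : ℕ, 1 ≤ n →
      (n:ℝ) * Real.log d + Real.log (L / c) ≤ Real.log |Real.log ‖f^[n] p‖| ∧
      Real.log |Real.log ‖f^[n] p‖| ≤ (n:ℝ) * Real.log d + Real.log L := by
    intro n hn
    have hdn : (0:ℝ) < (d:ℝ) ^ n := by positivity
    have hub : Real.log ‖f^[n] p‖ ≤ ((d:ℝ) ^ n / c) * Real.log (‖p.1‖) := by
      have := Real.log_le_log (hNpos n) (hbound n)
      rwa [Real.log_rpow hz0] at this
    have hlb : ((d:ℝ) ^ n) * Real.log (‖p.1‖) ≤ Real.log ‖f^[n] p‖ := by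
      have := Real.log_le_log (by positivity) (hlow n)
      rwa [Real.log_rpow hz0] at this
    have hlogz : Real.log (‖p.1‖) = -L := by simp [hLdef]
    have hneg : Real.log ‖f^[n] p‖ < 0 := by
      have : ((d:ℝ) ^ n / c) * Real.log (‖p.1‖) < 0 := by
        rw [hlogz]
        have : 0 < (d:ℝ) ^ n / c := by positivity
        nlinarith
      linarith
    have habs : |Real.log ‖f^[n] p‖| = -Real.log ‖f^[n] p‖ := abs_of_neg hneg
    rw [habs]
    constructor
    · have h1 : (d:ℝ) ^ n / c * L ≤ -Real.log ‖f^[n] p‖ := by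
        rw [hlogz] at hub; linarith
      have h2 : Real.log ((d:ℝ) ^ n * (L / c)) ≤ Real.log (-Real.log ‖f^[n] p‖) := by
        apply Real.log_le_log (by positivity)
        calc (d:ℝ) ^ n * (L / c) = (d:ℝ) ^ n / c * L := by ring
          _ ≤ _ := h1
      rw [Real.log_mul (ne_of_gt hdn) (by positivity), Real.log_pow] at h2
      exact h2
    · have h1 : -Real.log ‖f^[n] p‖ ≤ (d:ℝ) ^ n * L := by
        rw [hlogz] at hlb; linarith
      have hpos : 0 < -Real.log ‖f^[n] p‖ := by linarith [hneg]
      have h2 : Real.log (-Real.log ‖f^[n] p‖) ≤ Real.log ((d:ℝ) ^ n * L) :=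
        Real.log_le_log hpos h1
      rw [Real.log_mul (ne_of_gt hdn) (ne_of_gt hL), Real.log_pow] at h2
      exact h2
  -- squeeze
  have haux : ∀ C : ℝ, Tendsto (fun n : ℕ => Real.log d + (1 / (n:ℝ)) * C)
      atTop (nhds (Real.log d)) := by
    intro C
    have : Tendsto (fun n : ℕ => (1 / (n:ℝ)) * C) atTop (nhds (0 * C)) :=
      tendsto_one_div_atTop_nhds_zero_nat.mul_const C
    simpa using tendsto_const_nhds.add this
  apply tendsto_of_tendsto_of_tendsto_of_le_of_le' (haux (Real.log (L / c))) (haux (Real.log L))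
  · filter_upwards [eventually_ge_atTop 1] with n hn
    have hn0 : (n:ℝ) ≠ 0 := by exact_mod_cast (by omega : n ≠ 0)
    have := (hkey n hn).1
    have hmul : (1 / (n:ℝ)) * ((n:ℝ) * Real.log d + Real.log (L / c)) ≤
        (1 / (n:ℝ)) * Real.log |Real.log ‖f^[n] p‖| := by
      apply mul_le_mul_of_nonneg_left this (by positivity)
    calc Real.log d + (1 / (n:ℝ)) * Real.log (L / c)
        = (1 / (n:ℝ)) * ((n:ℝ) * Real.log d + Real.log (L / c)) := by field_simp
      _ ≤ _ := hmul
  · filter_upwards [eventually_ge_atTop 1] with n hn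
    have hn0 : (n:ℝ) ≠ 0 := by exact_mod_cast (by omega : n ≠ 0)
    have := (hkey n hn).2
    have hmul : (1 / (n:ℝ)) * Real.log |Real.log ‖f^[n] p‖| ≤
        (1 / (n:ℝ)) * ((n:ℝ) * Real.log d + Real.log L) := by
      apply mul_le_mul_of_nonneg_left this (by positivity)
    calc (1 / (n:ℝ)) * Real.log |Real.log ‖f^[n] p‖| ≤
        (1 / (n:ℝ)) * ((n:ℝ) * Real.log d + Real.log L) := hmul
      _ = Real.log d + (1 / (n:ℝ)) * Real.log L := by field_simp
end

section
/- Let k be a field of characteristic 0 and let f(z,w) = (z^d(1+ε(z,w)), w^c + z·h(z,w)) be a formal (or convergent) germ at 0 ∈ k² with d ≥ 2, ε(0,0)=0. Then there exists a unique formal power series φ(z,w) with φ(0,0)=0 such that the coordinate change Φ(z,w) = (z(1+φ(z,w)), w) satisfies z ∘ Φ ∘ f = (z(1+φ))^d, i.e. Φ conjugates f to a germ whose first coordinate is exactly z^d. Explicitly, 1+φ = Π_{n≥1} (1 + ε ∘ f^{n-1})^{d^{-n}}. -/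
open scoped Classical

noncomputable section

/-- Substitution of the pair `f = (f₁, f₂)` of formal power series (each with vanishing
constant term) into a two-variable formal power series `φ`, i.e. `φ ∘ f`:
the coefficient of `z^{e₀} w^{e₁}` in `φ(f₁, f₂)` is
`Σ_{i+j ≤ e₀+e₁} φ_{ij} · coeff_{e}(f₁^i f₂^j)` (the sum is finite because `f₁, f₂` have
order `≥ 1`). -/
def psSubst {k : Type*} [CommRing k] (f₁ f₂ φ : MvPowerSeries (Fin 2) k) :
    MvPowerSeries (Fin 2) k :=
  fun e : Fin 2 →₀ ℕ =>
    ∑ i ∈ Finset.range (e 0 + e 1 + 1), ∑ j ∈ Finset.range (e 0 + e 1 + 1),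
      MvPowerSeries.coeff (Finsupp.single 0 i + Finsupp.single 1 j) φ *
        MvPowerSeries.coeff e (f₁ ^ i * f₂ ^ j)

namespace Stmt5Aux

open MvPowerSeries Finsupp

variable {k : Type*} [Field k] [CharZero k]

/-- Lexicographic relation on monomials of two variables. -/
def rel (a b : Fin 2 →₀ ℕ) : Prop := a 0 < b 0 ∨ (a 0 = b 0 ∧ a 1 < b 1)

theorem rel_wf : WellFounded (rel) := by
  have hw : WellFounded (InvImage (Prod.Lex (· < · : ℕ → ℕ → Prop) (· < · : ℕ → ℕ → Prop))
      (fun a : Fin 2 →₀ ℕ => (a 0, a 1))) :=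
    InvImage.wf _ (WellFounded.prod_lex wellFounded_lt wellFounded_lt)
  refine Subrelation.wf (fun {a b} hab => ?_) hw
  rcases hab with hab | ⟨hab, hab'⟩
  · exact Prod.Lex.left _ _ hab
  · show Prod.Lex _ _ (a 0, a 1) (b 0, b 1)
    rw [hab]
    exact Prod.Lex.right _ hab'

theorem rel_irrefl (a : Fin 2 →₀ ℕ) : ¬ rel a a := by
  rintro (h | ⟨h, h'⟩) <;> omega

theorem rel_trans {a b c : Fin 2 →₀ ℕ} : rel a b → rel b c → rel a c := by
  rintro (h | ⟨h, h'⟩) (g | ⟨g, g'⟩)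
  · exact Or.inl (h.trans g)
  · exact Or.inl (g ▸ h)
  · exact Or.inl (h ▸ g)
  · exact Or.inr ⟨h.trans g, h'.trans g'⟩

theorem fin2_ext {a b : Fin 2 →₀ ℕ} (h0 : a 0 = b 0) (h1 : a 1 = b 1) : a = b := by
  ext s
  fin_cases s
  · exact h0
  · exact h1

theorem rel_of_le_of_ne {a b : Fin 2 →₀ ℕ} (hle : a ≤ b) (hne : a ≠ b) : rel a b := by
  have h0 : a 0 ≤ b 0 := Finsupp.le_def.mp hle 0
  have h1 : a 1 ≤ b 1 := Finsupp.le_def.mp hle 1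
  rcases lt_or_eq_of_le h0 with hc | hc
  · exact Or.inl hc
  · exact Or.inr ⟨hc, lt_of_le_of_ne h1 fun hh => hne (fin2_ext hc hh)⟩

theorem apply0_single_add (i j : ℕ) :
    (Finsupp.single (0 : Fin 2) i + Finsupp.single 1 j : Fin 2 →₀ ℕ) 0 = i := by
  simp

theorem apply1_single_add (i j : ℕ) :
    (Finsupp.single (0 : Fin 2) i + Finsupp.single 1 j : Fin 2 →₀ ℕ) 1 = j := by
  simp

theorem eq_single_add (e : Fin 2 →₀ ℕ) :
    e = Finsupp.single 0 (e 0) + Finsupp.single 1 (e 1) :=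
  fin2_ext (by simp) (by simp)

/-- First coordinate of the germ. -/
def F1 (d : ℕ) (ε : MvPowerSeries (Fin 2) k) : MvPowerSeries (Fin 2) k :=
  X 0 ^ d * (1 + ε)

/-- Second coordinate of the germ. -/
def F2 (c : ℕ) (h : MvPowerSeries (Fin 2) k) : MvPowerSeries (Fin 2) k :=
  X 1 ^ c + X 0 * h

theorem coeff_FF_ne_zero {d c : ℕ} {ε h : MvPowerSeries (Fin 2) k} {e : Fin 2 →₀ ℕ} {i j : ℕ}
    (hne : MvPowerSeries.coeff e (F1 d ε ^ i * F2 c h ^ j) ≠ 0) : d * i ≤ e 0 := by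
  have hrw : F1 d ε ^ i * F2 c h ^ j
      = monomial (Finsupp.single 0 (d * i)) 1 * ((1 + ε) ^ i * F2 c h ^ j) := by
    rw [F1, mul_pow, ← mul_assoc, ← pow_mul, X_pow_eq]
  by_contra hcon
  apply hne
  rw [hrw, coeff_monomial_mul, if_neg]
  intro hle
  exact hcon (by simpa using Finsupp.le_def.mp hle 0)

theorem coeff_single1_F2 {c : ℕ} {h : MvPowerSeries (Fin 2) k} (m : ℕ) :
    MvPowerSeries.coeff (Finsupp.single 1 m) (F2 c h) = if m = c then 1 else 0 := by
  have hX0 : MvPowerSeries.coeff (Finsupp.single (1 : Fin 2) m) (X 0 * h) = 0 := by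
    rw [X_def, coeff_monomial_mul, if_neg]
    intro hle
    simpa using Finsupp.le_def.mp hle 0
  rw [F2, map_add, X_pow_eq, coeff_monomial, hX0, add_zero]
  by_cases hmc : m = c
  · simp [hmc]
  · rw [if_neg, if_neg hmc]
    intro hh
    exact hmc (by simpa using DFunLike.congr_fun hh 1)

theorem coeff_single1_F2_pow {c : ℕ} {h : MvPowerSeries (Fin 2) k} (j : ℕ) :
    ∀ n : ℕ, MvPowerSeries.coeff (Finsupp.single 1 n) (F2 c h ^ j)
      = if c * j = n then 1 else 0 := by
  induction j with
  | zero =>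
    intro n
    rw [pow_zero, coeff_one]
    simp [Finsupp.single_eq_zero, eq_comm]
  | succ j ih =>
    intro n
    rw [pow_succ, coeff_mul, Finsupp.antidiagonal_single, Finset.sum_map]
    have hterm : ∀ p : ℕ × ℕ,
        MvPowerSeries.coeff (Finsupp.single 1 p.1) (F2 c h ^ j) *
          MvPowerSeries.coeff (Finsupp.single 1 p.2) (F2 c h)
        = if p = (c * j, c) then 1 else 0 := by
      intro p
      rw [ih p.1, coeff_single1_F2]
      by_cases h1 : c * j = p.1
      · by_cases h2 : p.2 = c
        · rw [if_pos h1, if_pos h2, if_pos (Prod.ext_iff.mpr ⟨h1.symm, h2⟩), one_mul]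
        · rw [if_pos h1, if_neg h2, mul_zero, if_neg fun hp => h2 (by rw [hp])]
      · rw [if_neg h1, zero_mul, if_neg fun hp => h1 (by rw [hp])]
    calc (∑ p ∈ Finset.HasAntidiagonal.antidiagonal n,
            MvPowerSeries.coeff (Finsupp.single 1 p.1) (F2 c h ^ j) *
              MvPowerSeries.coeff (Finsupp.single 1 p.2) (F2 c h))
        = ∑ p ∈ Finset.HasAntidiagonal.antidiagonal n, if p = (c * j, c) then (1 : k) else 0 :=
          Finset.sum_congr rfl fun p _ => hterm p
      _ = if (c * j, c) ∈ Finset.HasAntidiagonal.antidiagonal n then (1 : k) else 0 := by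
          rw [Finset.sum_ite_eq' (Finset.HasAntidiagonal.antidiagonal n) ((c * j, c)) (fun _ => (1:k))]
      _ = if c * (j + 1) = n then 1 else 0 := by
          simp [Finset.HasAntidiagonal.mem_antidiagonal, Nat.mul_succ]

theorem coeff_single1_FF {d c : ℕ} (hd : 2 ≤ d) {ε h : MvPowerSeries (Fin 2) k} (n i j : ℕ) :
    MvPowerSeries.coeff (Finsupp.single 1 n) (F1 d ε ^ i * F2 c h ^ j)
      = if i = 0 ∧ c * j = n then 1 else 0 := by
  rcases Nat.eq_zero_or_pos i with hi | hi
  · subst hi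
    rw [pow_zero, one_mul, coeff_single1_F2_pow]
    by_cases hc : c * j = n
    · rw [if_pos hc, if_pos ⟨rfl, hc⟩]
    · rw [if_neg hc, if_neg (by rintro ⟨-, hcc⟩; exact hc hcc)]
  · rw [if_neg (by rintro ⟨h0, -⟩; omega)]
    by_contra hne
    have hle := coeff_FF_ne_zero hne
    have : (Finsupp.single (1 : Fin 2) n : Fin 2 →₀ ℕ) 0 = 0 := by simp
    rw [this] at hle
    have h2 : 2 * i ≤ d * i := Nat.mul_le_mul_right i hd
    omega

theorem supp_rel {d c : ℕ} (hd : 2 ≤ d) {ε h : MvPowerSeries (Fin 2) k} {e : Fin 2 →₀ ℕ}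
    (he : e ≠ 0) {i j : ℕ}
    (hne : MvPowerSeries.coeff e (F1 d ε ^ i * F2 c h ^ j) ≠ 0)
    (hdiag : ¬(i = e 0 ∧ j = e 1)) :
    rel (Finsupp.single 0 i + Finsupp.single 1 j) e := by
  have hgoal : i < e 0 ∨ (i = e 0 ∧ j < e 1) →
      rel (Finsupp.single 0 i + Finsupp.single 1 j) e := by
    intro hk
    rcases hk with hk | ⟨hk, hk'⟩
    · exact Or.inl (by rw [apply0_single_add]; exact hk)
    · exact Or.inr ⟨by rw [apply0_single_add]; exact hk,
        by rw [apply1_single_add]; exact hk'⟩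
  apply hgoal
  rcases Nat.eq_zero_or_pos i with hi0 | hip
  · subst hi0
    rcases Nat.eq_zero_or_pos (e 0) with he0 | he0p
    · -- e = single 1 (e 1)
      have hee : e = Finsupp.single 1 (e 1) :=
        fin2_ext (by simp [he0]) (by simp)
      rw [hee, coeff_single1_FF hd] at hne
      have hcj : c * j = e 1 := by
        by_contra hc
        exact hne (if_neg (by rintro ⟨-, hcc⟩; exact hc hcc))
      have hje : j ≠ e 1 := fun hj => hdiag ⟨he0.symm, hj⟩
      have he1 : e 1 ≠ 0 := by
        intro h1
        exact he (fin2_ext (by rw [he0]; simp) (by rw [h1]; simp))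
      have hc1 : 1 ≤ c := by
        rcases Nat.eq_zero_or_pos c with rfl | hc
        · simp at hcj; omega
        · exact hc
      have : j ≤ e 1 := hcj ▸ Nat.le_mul_of_pos_left j hc1
      exact Or.inr ⟨he0.symm, lt_of_le_of_ne this hje⟩
    · exact Or.inl he0p
  · have hle := coeff_FF_ne_zero hne
    have h2 : 2 * i ≤ d * i := Nat.mul_le_mul_right i hd
    left; omega

theorem coeff_diag {d c : ℕ} (hd : 2 ≤ d) {ε h : MvPowerSeries (Fin 2) k} {e : Fin 2 →₀ ℕ}
    (he : e ≠ 0) :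
    MvPowerSeries.coeff e (F1 d ε ^ (e 0) * F2 c h ^ (e 1))
      = if c = 1 ∧ e 0 = 0 then 1 else 0 := by
  rcases Nat.eq_zero_or_pos (e 0) with he0 | he0p
  · have hee : e = Finsupp.single 1 (e 1) :=
      fin2_ext (by simp [he0]) (by simp)
    have he1 : e 1 ≠ 0 := by
      intro h1
      exact he (fin2_ext (by rw [he0]; simp) (by rw [h1]; simp))
    have key := coeff_single1_FF (c := c) (ε := ε) (h := h) hd (e 1) 0 (e 1)
    rw [← hee, pow_zero, one_mul] at key
    rw [he0, pow_zero, one_mul, key]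
    have : (0 = 0 ∧ c * e 1 = e 1) ↔ (c = 1 ∧ 0 = 0) := by
      constructor
      · rintro ⟨-, hc⟩
        refine ⟨?_, rfl⟩
        have : c * e 1 = 1 * e 1 := by omega
        exact Nat.eq_of_mul_eq_mul_right (Nat.pos_of_ne_zero he1) this
      · rintro ⟨rfl, -⟩
        simp
    exact if_congr this rfl rfl
  · rw [if_neg (by rintro ⟨-, h0⟩; omega)]
    by_contra hne
    have hle := coeff_FF_ne_zero hne
    have h2 : 2 * e 0 ≤ d * e 0 := Nat.mul_le_mul_right (e 0) hd
    omega

theorem coeff_psSubst (f1 f2 φ : MvPowerSeries (Fin 2) k) (e : Fin 2 →₀ ℕ) :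
    MvPowerSeries.coeff e (psSubst f1 f2 φ) =
      ∑ i ∈ Finset.range (e 0 + e 1 + 1), ∑ j ∈ Finset.range (e 0 + e 1 + 1),
        MvPowerSeries.coeff (Finsupp.single 0 i + Finsupp.single 1 j) φ *
          MvPowerSeries.coeff e (f1 ^ i * f2 ^ j) := rfl

theorem coeff_S_zero (f1 f2 φ : MvPowerSeries (Fin 2) k) :
    MvPowerSeries.coeff (0 : Fin 2 →₀ ℕ) (psSubst f1 f2 φ)
      = MvPowerSeries.coeff 0 φ := by
  rw [coeff_psSubst]
  simp [coeff_one]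

theorem Sdiff {d c : ℕ} (hd : 2 ≤ d) {ε h : MvPowerSeries (Fin 2) k}
    {φ ψ : MvPowerSeries (Fin 2) k} {e : Fin 2 →₀ ℕ} (he : e ≠ 0)
    (hag : ∀ b, rel b e → MvPowerSeries.coeff b φ = MvPowerSeries.coeff b ψ) :
    MvPowerSeries.coeff e (psSubst (F1 d ε) (F2 c h) φ)
      - MvPowerSeries.coeff e (psSubst (F1 d ε) (F2 c h) ψ)
    = (if c = 1 ∧ e 0 = 0 then 1 else 0)
        * (MvPowerSeries.coeff e φ - MvPowerSeries.coeff e ψ) := by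
  classical
  set t : ℕ → ℕ → k := fun i j =>
    MvPowerSeries.coeff (Finsupp.single 0 i + Finsupp.single 1 j) (φ - ψ) *
      MvPowerSeries.coeff e (F1 d ε ^ i * F2 c h ^ j) with ht
  have hterm : ∀ i j : ℕ, ¬(i = e 0 ∧ j = e 1) → t i j = 0 := by
    intro i j hij
    rcases eq_or_ne (MvPowerSeries.coeff e (F1 d ε ^ i * F2 c h ^ j)) 0 with h0 | h0
    · rw [ht]; dsimp only; rw [h0, mul_zero]
    · rw [ht]; dsimp only
      rw [map_sub, hag _ (supp_rel hd he h0 hij), sub_self, zero_mul]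
  have hsum : MvPowerSeries.coeff e (psSubst (F1 d ε) (F2 c h) φ)
      - MvPowerSeries.coeff e (psSubst (F1 d ε) (F2 c h) ψ)
      = ∑ i ∈ Finset.range (e 0 + e 1 + 1), ∑ j ∈ Finset.range (e 0 + e 1 + 1), t i j := by
    rw [coeff_psSubst, coeff_psSubst, ← Finset.sum_sub_distrib]
    refine Finset.sum_congr rfl fun i _ => ?_
    rw [← Finset.sum_sub_distrib]
    refine Finset.sum_congr rfl fun j _ => ?_
    rw [ht]; dsimp only
    rw [map_sub, sub_mul]
  rw [hsum]
  have h0mem : e 0 ∈ Finset.range (e 0 + e 1 + 1) := Finset.mem_range.mpr (by omega)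
  have h1mem : e 1 ∈ Finset.range (e 0 + e 1 + 1) := Finset.mem_range.mpr (by omega)
  rw [Finset.sum_eq_single (e 0)
      (fun i _ hi => Finset.sum_eq_zero fun j _ => hterm i j (by tauto))
      (fun hns => absurd h0mem hns)]
  rw [Finset.sum_eq_single (e 1)
      (fun j _ hj => hterm (e 0) j (by tauto))
      (fun hns => absurd h1mem hns)]
  rw [ht]; dsimp only
  rw [← eq_single_add, coeff_diag hd he, map_sub, mul_comm]

theorem S_agree {d c : ℕ} (hd : 2 ≤ d) {ε h : MvPowerSeries (Fin 2) k}
    {φ ψ : MvPowerSeries (Fin 2) k} {e : Fin 2 →₀ ℕ}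
    (hag : ∀ b, rel b e → MvPowerSeries.coeff b φ = MvPowerSeries.coeff b ψ) :
    ∀ b, rel b e →
      MvPowerSeries.coeff b (psSubst (F1 d ε) (F2 c h) φ)
        = MvPowerSeries.coeff b (psSubst (F1 d ε) (F2 c h) ψ) := by
  intro b hb
  rcases eq_or_ne b 0 with rfl | hb0
  · rw [coeff_S_zero, coeff_S_zero]
    exact hag 0 hb
  · have hdiff := Sdiff (c := c) (ε := ε) (h := h) (φ := φ) (ψ := ψ) hd hb0
      (fun b' hb' => hag b' (rel_trans hb' hb))
    rw [hag b hb, sub_self, mul_zero, sub_eq_zero] at hdiff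
    exact hdiff

theorem pow_agree {φ ψ : MvPowerSeries (Fin 2) k} (m : ℕ) :
    ∀ e : Fin 2 →₀ ℕ,
      (∀ b ≤ e, MvPowerSeries.coeff b φ = MvPowerSeries.coeff b ψ) →
      MvPowerSeries.coeff e (φ ^ m) = MvPowerSeries.coeff e (ψ ^ m) := by
  induction m with
  | zero => intro e _; rw [pow_zero, pow_zero]
  | succ m ih =>
    intro e hag
    rw [pow_succ, pow_succ, coeff_mul, coeff_mul]
    refine Finset.sum_congr rfl fun p hp => ?_
    have hmem : p.1 + p.2 = e := Finset.HasAntidiagonal.mem_antidiagonal.mp hp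
    have h1 : p.1 ≤ e := by rw [← hmem]; exact self_le_add_right _ _
    have h2 : p.2 ≤ e := by rw [← hmem]; exact self_le_add_left _ _
    rw [ih p.1 (fun b hb => hag b (hb.trans h1)), hag p.2 h2]

theorem pow_diff {φ ψ : MvPowerSeries (Fin 2) k}
    (hφ : MvPowerSeries.coeff 0 φ = 0) (hψ : MvPowerSeries.coeff 0 ψ = 0)
    {e : Fin 2 →₀ ℕ}
    (hag : ∀ b, rel b e → MvPowerSeries.coeff b φ = MvPowerSeries.coeff b ψ)
    (m : ℕ) (hm : 2 ≤ m) :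
    MvPowerSeries.coeff e (φ ^ m) = MvPowerSeries.coeff e (ψ ^ m) := by
  obtain ⟨n, rfl⟩ : ∃ n, m = n + 2 := ⟨m - 2, by omega⟩
  rw [show n + 2 = (n + 1) + 1 from rfl, pow_succ φ (n + 1), pow_succ ψ (n + 1),
    coeff_mul, coeff_mul]
  refine Finset.sum_congr rfl fun p hp => ?_
  have hmem : p.1 + p.2 = e := Finset.HasAntidiagonal.mem_antidiagonal.mp hp
  have h1le : p.1 ≤ e := by rw [← hmem]; exact self_le_add_right _ _
  have h2le : p.2 ≤ e := by rw [← hmem]; exact self_le_add_left _ _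
  rcases eq_or_ne p.2 0 with h20 | h20
  · rw [h20, hφ, hψ, mul_zero, mul_zero]
  rcases eq_or_ne p.1 0 with h10 | h10
  · have hcφ : MvPowerSeries.coeff (0 : Fin 2 →₀ ℕ) (φ ^ (n + 1)) = 0 := by
      rw [coeff_zero_eq_constantCoeff_apply, map_pow,
        ← coeff_zero_eq_constantCoeff_apply, hφ, zero_pow (Nat.succ_ne_zero n)]
    have hcψ : MvPowerSeries.coeff (0 : Fin 2 →₀ ℕ) (ψ ^ (n + 1)) = 0 := by
      rw [coeff_zero_eq_constantCoeff_apply, map_pow,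
        ← coeff_zero_eq_constantCoeff_apply, hψ, zero_pow (Nat.succ_ne_zero n)]
    rw [h10, hcφ, hcψ, zero_mul, zero_mul]
  · have h1ne : p.1 ≠ e := by
      intro hh
      apply h20
      rw [hh] at hmem
      exact (add_eq_left).mp hmem
    have h2ne : p.2 ≠ e := by
      intro hh
      apply h10
      rw [hh] at hmem
      exact (add_eq_right).mp hmem
    rw [hag p.2 (rel_of_le_of_ne h2le h2ne)]
    rw [pow_agree (n + 1) p.1 (fun b hb => hag b
      (rel_of_le_of_ne (hb.trans h1le)
        (fun heq => h1ne (le_antisymm h1le (heq ▸ hb)))))]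

theorem one_add_pow_diff {d : ℕ} (hd : 2 ≤ d) {φ ψ : MvPowerSeries (Fin 2) k}
    (hφ : MvPowerSeries.coeff 0 φ = 0) (hψ : MvPowerSeries.coeff 0 ψ = 0)
    {e : Fin 2 →₀ ℕ} (he : e ≠ 0)
    (hag : ∀ b, rel b e → MvPowerSeries.coeff b φ = MvPowerSeries.coeff b ψ) :
    MvPowerSeries.coeff e ((1 + φ) ^ d) - MvPowerSeries.coeff e ((1 + ψ) ^ d)
      = (d : k) * (MvPowerSeries.coeff e φ - MvPowerSeries.coeff e ψ) := by
  have hpow : ∀ χ : MvPowerSeries (Fin 2) k,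
      MvPowerSeries.coeff e ((1 + χ) ^ d)
        = ∑ m ∈ Finset.range (d + 1), (d.choose m : k) * MvPowerSeries.coeff e (χ ^ m) := by
    intro χ
    rw [add_comm (1 : MvPowerSeries (Fin 2) k) χ, add_pow, map_sum]
    refine Finset.sum_congr rfl fun m _ => ?_
    rw [one_pow, mul_one, mul_comm (χ ^ m),
      ← map_natCast (MvPowerSeries.C) (d.choose m), coeff_C_mul]
  rw [hpow, hpow, ← Finset.sum_sub_distrib]
  have hone : (1 : ℕ) ∈ Finset.range (d + 1) := Finset.mem_range.mpr (by omega)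
  rw [Finset.sum_eq_single 1 ?side ?notmem]
  · rw [pow_one, pow_one, Nat.choose_one_right, mul_sub]
  case side =>
    intro m _ hm1
    rcases Nat.eq_zero_or_pos m with rfl | hmp
    · simp
    · have hm2 : 2 ≤ m := by omega
      rw [pow_diff hφ hψ hag m hm2]
      ring
  case notmem => exact fun hns => absurd hone hns

theorem master {d c : ℕ} (hd : 2 ≤ d) {ε h : MvPowerSeries (Fin 2) k}
    (hε : MvPowerSeries.coeff 0 ε = 0)
    {φ ψ : MvPowerSeries (Fin 2) k}
    (hφ : MvPowerSeries.coeff 0 φ = 0) (hψ : MvPowerSeries.coeff 0 ψ = 0)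
    {e : Fin 2 →₀ ℕ} (he : e ≠ 0)
    (hag : ∀ b, rel b e → MvPowerSeries.coeff b φ = MvPowerSeries.coeff b ψ) :
    MvPowerSeries.coeff e ((1 + ε) * (1 + psSubst (F1 d ε) (F2 c h) φ))
        - MvPowerSeries.coeff e ((1 + φ) ^ d)
        + ((d : k) - if c = 1 ∧ e 0 = 0 then 1 else 0) * MvPowerSeries.coeff e φ
      = MvPowerSeries.coeff e ((1 + ε) * (1 + psSubst (F1 d ε) (F2 c h) ψ))
        - MvPowerSeries.coeff e ((1 + ψ) ^ d)
        + ((d : k) - if c = 1 ∧ e 0 = 0 then 1 else 0) * MvPowerSeries.coeff e ψ := by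
  have hP := one_add_pow_diff hd hφ hψ he hag
  have hS := Sdiff (c := c) (ε := ε) (h := h) hd he hag
  have hQ : MvPowerSeries.coeff e (ε * psSubst (F1 d ε) (F2 c h) φ)
      - MvPowerSeries.coeff e (ε * psSubst (F1 d ε) (F2 c h) ψ) = 0 := by
    have hsag := S_agree (c := c) (ε := ε) (h := h) hd hag
    rw [← map_sub, ← mul_sub, coeff_mul]
    refine Finset.sum_eq_zero fun p hp => ?_
    have hmem : p.1 + p.2 = e := Finset.HasAntidiagonal.mem_antidiagonal.mp hp
    rcases eq_or_ne p.1 0 with h10 | h10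
    · rw [h10, hε, zero_mul]
    · have h2e : rel p.2 e := by
        refine rel_of_le_of_ne (by rw [← hmem]; exact self_le_add_left _ _) ?_
        intro hh
        apply h10
        rw [hh] at hmem
        exact (add_eq_right).mp hmem
      rw [map_sub, hsag p.2 h2e, sub_self, mul_zero]
  have hexp : ∀ χ : MvPowerSeries (Fin 2) k,
      MvPowerSeries.coeff e ((1 + ε) * (1 + χ))
        = MvPowerSeries.coeff e (1 : MvPowerSeries (Fin 2) k)
          + MvPowerSeries.coeff e ε + MvPowerSeries.coeff e χ
          + MvPowerSeries.coeff e (ε * χ) := by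
    intro χ
    have : (1 + ε) * (1 + χ) = 1 + ε + χ + ε * χ := by ring
    rw [this, map_add, map_add, map_add]
  rw [hexp, hexp]
  linear_combination hS + hQ - hP

/-- The recursively defined coefficients of the conjugating series. -/
def gfun (c d : ℕ) (ε h : MvPowerSeries (Fin 2) k) : (Fin 2 →₀ ℕ) → k :=
  rel_wf.fix (C := fun _ => k) (fun e ih =>
    if e = 0 then 0 else
      ((d : k) - if c = 1 ∧ e 0 = 0 then 1 else 0)⁻¹ *
        (MvPowerSeries.coeff e ((1 + ε) * (1 + psSubst (F1 d ε) (F2 c h)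
            (fun b => if hb : rel b e then ih b hb else 0)))
          - MvPowerSeries.coeff e
              ((1 + show MvPowerSeries (Fin 2) k from
                  fun b => if hb : rel b e then ih b hb else 0) ^ d)))

/-- Truncation of `gfun` below `e`. -/
def trunc (c d : ℕ) (ε h : MvPowerSeries (Fin 2) k) (e : Fin 2 →₀ ℕ) :
    MvPowerSeries (Fin 2) k :=
  fun b => if rel b e then gfun c d ε h b else 0

theorem gfun_eq (c d : ℕ) (ε h : MvPowerSeries (Fin 2) k) (e : Fin 2 →₀ ℕ) :
    gfun c d ε h e = if e = 0 then 0 else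
      ((d : k) - if c = 1 ∧ e 0 = 0 then 1 else 0)⁻¹ *
        (MvPowerSeries.coeff e ((1 + ε) * (1 + psSubst (F1 d ε) (F2 c h)
            (trunc c d ε h e)))
          - MvPowerSeries.coeff e ((1 + trunc c d ε h e) ^ d)) := by
  show rel_wf.fix (C := fun _ => k) _ e = _
  rw [WellFounded.fix_eq]
  simp only [dite_eq_ite]
  rfl

theorem gfun_zero (c d : ℕ) (ε h : MvPowerSeries (Fin 2) k) : gfun c d ε h 0 = 0 := by
  rw [gfun_eq, if_pos rfl]

/-- The conjugating power series. -/
def Phi (c d : ℕ) (ε h : MvPowerSeries (Fin 2) k) : MvPowerSeries (Fin 2) k :=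
  gfun c d ε h

theorem coeff_Phi (c d : ℕ) (ε h : MvPowerSeries (Fin 2) k) (e : Fin 2 →₀ ℕ) :
    MvPowerSeries.coeff e (Phi c d ε h) = gfun c d ε h e := rfl

theorem coeff_trunc (c d : ℕ) (ε h : MvPowerSeries (Fin 2) k) (e b : Fin 2 →₀ ℕ) :
    MvPowerSeries.coeff b (trunc c d ε h e)
      = if rel b e then gfun c d ε h b else 0 := rfl

theorem coeff_Phi_zero (c d : ℕ) (ε h : MvPowerSeries (Fin 2) k) :
    MvPowerSeries.coeff 0 (Phi c d ε h) = 0 := gfun_zero c d ε h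

theorem coeff_trunc_zero (c d : ℕ) (ε h : MvPowerSeries (Fin 2) k) (e : Fin 2 →₀ ℕ) :
    MvPowerSeries.coeff 0 (trunc c d ε h e) = 0 := by
  rw [coeff_trunc]
  split_ifs with hr
  · exact gfun_zero c d ε h
  · rfl

theorem Dk_ne_zero {c d : ℕ} (hd : 2 ≤ d) (e : Fin 2 →₀ ℕ) :
    ((d : k) - if c = 1 ∧ e 0 = 0 then 1 else 0) ≠ 0 := by
  split_ifs with hc
  · exact sub_ne_zero.mpr (by exact_mod_cast (by omega : d ≠ 1))
  · rw [sub_zero]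
    exact Nat.cast_ne_zero.mpr (by omega)

theorem main_eq {c d : ℕ} (hd : 2 ≤ d) {ε h : MvPowerSeries (Fin 2) k}
    (hε0 : MvPowerSeries.coeff 0 ε = 0) (e : Fin 2 →₀ ℕ) :
    MvPowerSeries.coeff e ((1 + ε) * (1 + psSubst (F1 d ε) (F2 c h) (Phi c d ε h)))
      = MvPowerSeries.coeff e ((1 + Phi c d ε h) ^ d) := by
  rcases eq_or_ne e 0 with rfl | he
  · have hSc : MvPowerSeries.coeff (0 : Fin 2 →₀ ℕ)
        (psSubst (F1 d ε) (F2 c h) (Phi c d ε h)) = 0 := by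
      rw [coeff_S_zero, coeff_Phi_zero]
    rw [coeff_zero_eq_constantCoeff_apply, coeff_zero_eq_constantCoeff_apply,
      map_mul, map_pow, map_add, map_add, map_add, map_one,
      ← coeff_zero_eq_constantCoeff_apply, ← coeff_zero_eq_constantCoeff_apply,
      ← coeff_zero_eq_constantCoeff_apply, hε0, hSc, coeff_Phi_zero]
    norm_num
  · have hagree : ∀ b, rel b e →
        MvPowerSeries.coeff b (Phi c d ε h) = MvPowerSeries.coeff b (trunc c d ε h e) := by
      intro b hb
      rw [coeff_Phi, coeff_trunc, if_pos hb]
    have hM := master (c := c) (h := h) hd hε0 (coeff_Phi_zero c d ε h) (coeff_trunc_zero c d ε h e)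
      he hagree
    rw [coeff_trunc, if_neg (rel_irrefl e), mul_zero, add_zero] at hM
    rw [coeff_Phi] at hM
    have hge : gfun c d ε h e = ((d : k) - if c = 1 ∧ e 0 = 0 then 1 else 0)⁻¹ *
        (MvPowerSeries.coeff e ((1 + ε) * (1 + psSubst (F1 d ε) (F2 c h)
            (trunc c d ε h e)))
          - MvPowerSeries.coeff e ((1 + trunc c d ε h e) ^ d)) := by
      rw [gfun_eq, if_neg he]
    rw [hge, mul_inv_cancel_left₀ (Dk_ne_zero hd e)] at hM
    have h0 : MvPowerSeries.coeff e ((1 + ε) * (1 + psSubst (F1 d ε) (F2 c h) (Phi c d ε h)))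
        - MvPowerSeries.coeff e ((1 + Phi c d ε h) ^ d) = 0 := by
      linear_combination hM
    exact sub_eq_zero.mp h0

end Stmt5Aux

open Stmt5Aux in
/-- Let `k` be a field of characteristic 0 and let
`f(z,w) = (z^d(1+ε(z,w)), w^c + z·h(z,w))` be a formal germ at `0 ∈ k²` with `d ≥ 2` and
`ε(0,0) = 0`.  Then there exists a unique formal power series `φ` with `φ(0,0) = 0` such that
the coordinate change `Φ(z,w) = (z(1+φ(z,w)), w)` satisfies `z ∘ Φ ∘ f = (z(1+φ))^d`, i.e.
`z^d (1+ε) (1+φ∘f) = (z(1+φ))^d`, so that `Φ` conjugates `f` to a germ whose first coordinate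
is exactly `z^d`. -/
theorem stmt_5 (k : Type*) [Field k] [CharZero k]
    (c d : ℕ) (hd : 2 ≤ d)
    (ε h : MvPowerSeries (Fin 2) k)
    (hε : MvPowerSeries.constantCoeff ε = 0) :
    ∃! φ : MvPowerSeries (Fin 2) k,
      MvPowerSeries.constantCoeff φ = 0 ∧
      (MvPowerSeries.X 0 : MvPowerSeries (Fin 2) k) ^ d * (1 + ε) *
          (1 + psSubst ((MvPowerSeries.X 0) ^ d * (1 + ε))
            ((MvPowerSeries.X 1) ^ c + MvPowerSeries.X 0 * h) φ) =
        (MvPowerSeries.X 0 * (1 + φ)) ^ d := by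
  classical
  have hε0 : MvPowerSeries.coeff 0 ε = 0 := by
    rw [MvPowerSeries.coeff_zero_eq_constantCoeff_apply]; exact hε
  refine ⟨Phi c d ε h, ⟨?_, ?_⟩, ?_⟩
  · rw [← MvPowerSeries.coeff_zero_eq_constantCoeff_apply]
    exact coeff_Phi_zero c d ε h
  · have heq : (1 + ε) * (1 + psSubst (F1 d ε) (F2 c h) (Phi c d ε h))
        = (1 + Phi c d ε h) ^ d :=
      MvPowerSeries.ext (main_eq hd hε0)
    show (MvPowerSeries.X 0 : MvPowerSeries (Fin 2) k) ^ d *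
        (1 + ε) * (1 + psSubst (F1 d ε) (F2 c h) (Phi c d ε h))
      = (MvPowerSeries.X 0 * (1 + Phi c d ε h)) ^ d
    rw [mul_assoc, heq, mul_pow]
  · rintro ψ ⟨hψ0, hψeq⟩
    have hψ00 : MvPowerSeries.coeff 0 ψ = 0 := by
      rw [MvPowerSeries.coeff_zero_eq_constantCoeff_apply]; exact hψ0
    have hψeq' : (MvPowerSeries.X 0 : MvPowerSeries (Fin 2) k) ^ d *
        ((1 + ε) * (1 + psSubst (F1 d ε) (F2 c h) ψ))
      = (MvPowerSeries.X 0 : MvPowerSeries (Fin 2) k) ^ d * ((1 + ψ) ^ d) := by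
      rw [← mul_assoc, ← mul_pow]
      exact hψeq
    have hψc : ∀ e, MvPowerSeries.coeff e ((1 + ε) * (1 + psSubst (F1 d ε) (F2 c h) ψ))
        = MvPowerSeries.coeff e ((1 + ψ) ^ d) := by
      intro e
      have hco := congrArg (MvPowerSeries.coeff (Finsupp.single 0 d + e)) hψeq'
      rw [MvPowerSeries.X_pow_eq, MvPowerSeries.coeff_add_monomial_mul,
        MvPowerSeries.coeff_add_monomial_mul, one_mul, one_mul] at hco
      exact hco
    apply MvPowerSeries.ext
    intro e
    refine rel_wf.induction (C := fun b => MvPowerSeries.coeff b ψ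
      = MvPowerSeries.coeff b (Phi c d ε h)) e ?_
    intro x ih
    rcases eq_or_ne x 0 with rfl | hx
    · rw [hψ00, coeff_Phi_zero]
    · have hM := master (c := c) (h := h) hd hε0 hψ00 (coeff_Phi_zero c d ε h) hx ih
      rw [hψc x, main_eq hd hε0 x, sub_self, sub_self, zero_add, zero_add] at hM
      exact mul_left_cancel₀ (Dk_ne_zero hd x) hM

end
end

section
/- Let f(z,w) = (z^d, w^c + Σ_{j=0}^{c-1} h_j(z)w^j) over an algebraically closed field k of characteristic 0. Suppose x is a rigid point of the Berkovich unit ball over k((z)) corresponding to an irreducible formal germ C with intersection number m = (C · {z=0}), and let {y_i}_{i∈I} be the set of rigid preimages of x under f_⋄, corresponding to branches D_i with intersection numbers m_i. Writing e_i = d·m_i/m ∈ ℕ* and r_i = the multiplicity of D_i as a component of f*C, one has Σ_{i∈I} r_i e_i = c·d; in particular the number of preimages satisfies #I ≤ cd. -/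
open scoped Classical

/-- Substitution `z ↦ z^d` in a formal power series. -/
noncomputable def expandPS (k : Type*) [Field k] (e : ℕ) (φ : PowerSeries k) :
    PowerSeries k :=
  PowerSeries.mk fun n => if e ∣ n then PowerSeries.coeff (n / e) φ else 0

namespace StmtNine

variable {k : Type*} [Field k]

theorem coeff_expand (e : ℕ) (φ : PowerSeries k) (n : ℕ) :
    PowerSeries.coeff n (expandPS k e φ) =
      if e ∣ n then PowerSeries.coeff (n / e) φ else 0 := by
  simp [expandPS]

theorem coeff_expand_mul (e : ℕ) (he : 0 < e) (φ : PowerSeries k) (n : ℕ) :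
    PowerSeries.coeff (e * n) (expandPS k e φ) = PowerSeries.coeff n φ := by
  rw [coeff_expand, if_pos ⟨n, rfl⟩, Nat.mul_div_cancel_left _ he]

theorem expand_one (e : ℕ) (he : 0 < e) : expandPS k e 1 = 1 := by
  ext n
  rw [coeff_expand]
  rcases eq_or_ne n 0 with rfl | hn
  · simp
  · split_ifs with hdvd
    · have : n / e ≠ 0 := by
        obtain ⟨c, rfl⟩ := hdvd
        rw [Nat.mul_div_cancel_left _ he]
        rintro rfl; simp at hn
      simp [PowerSeries.coeff_one, this, hn]
    · simp [PowerSeries.coeff_one, hn]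

theorem expand_mul (e : ℕ) (he : 0 < e) (φ ψ : PowerSeries k) :
    expandPS k e (φ * ψ) = expandPS k e φ * expandPS k e ψ := by
  ext n
  rw [coeff_expand, PowerSeries.coeff_mul]
  by_cases hdvd : e ∣ n
  · obtain ⟨n', rfl⟩ := hdvd
    rw [Nat.mul_div_cancel_left _ he, if_pos ⟨n', rfl⟩, PowerSeries.coeff_mul]
    symm
    have hsub : (Finset.HasAntidiagonal.antidiagonal n').image (fun p : ℕ × ℕ => (e * p.1, e * p.2)) ⊆
        Finset.HasAntidiagonal.antidiagonal (e * n') := by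
      intro p hp
      simp only [Finset.mem_image, Finset.HasAntidiagonal.mem_antidiagonal, Prod.exists] at hp ⊢
      obtain ⟨a, b, hab, rfl⟩ := hp
      rw [← hab]; ring
    rw [← Finset.sum_subset hsub]
    · rw [Finset.sum_image (by
        intro x _ y _ hxy
        simp only [Prod.mk.injEq] at hxy
        exact Prod.ext (Nat.eq_of_mul_eq_mul_left he hxy.1)
          (Nat.eq_of_mul_eq_mul_left he hxy.2))]
      apply Finset.sum_congr rfl
      intro p _
      rw [coeff_expand, coeff_expand, if_pos (dvd_mul_right e p.1),
        if_pos (dvd_mul_right e p.2), Nat.mul_div_cancel_left _ he,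
        Nat.mul_div_cancel_left _ he]
    · intro p hp hnotmem
      rw [coeff_expand, coeff_expand]
      by_cases h1 : e ∣ p.1
      · by_cases h2 : e ∣ p.2
        · exfalso
          apply hnotmem
          obtain ⟨a, ha⟩ := h1
          obtain ⟨b, hb⟩ := h2
          have hmem := Finset.HasAntidiagonal.mem_antidiagonal.mp hp
          simp only [Finset.mem_image, Finset.HasAntidiagonal.mem_antidiagonal, Prod.exists]
          exact ⟨a, b, Nat.eq_of_mul_eq_mul_left he
            (by rw [Nat.mul_add, ← ha, ← hb]; exact hmem),
            Prod.ext ha.symm hb.symm⟩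
        · rw [if_neg h2, mul_zero]
      · rw [if_neg h1, zero_mul]
  · rw [if_neg hdvd, PowerSeries.coeff_mul]
    symm
    apply Finset.sum_eq_zero
    intro p hp
    have hmem := Finset.HasAntidiagonal.mem_antidiagonal.mp hp
    rw [coeff_expand, coeff_expand]
    by_cases h1 : e ∣ p.1
    · by_cases h2 : e ∣ p.2
      · exact absurd (hmem ▸ Nat.dvd_add h1 h2) hdvd
      · rw [if_neg h2, mul_zero]
    · rw [if_neg h1, zero_mul]

/-- `expandPS` as a ring hom. -/
noncomputable def expandHom (k : Type*) [Field k] (e : ℕ) (he : 0 < e) :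
    PowerSeries k →+* PowerSeries k where
  toFun := expandPS k e
  map_one' := expand_one e he
  map_mul' := expand_mul e he
  map_zero' := by ext n; simp [coeff_expand]
  map_add' := by
    intro φ ψ; ext n; simp only [coeff_expand, map_add]
    split_ifs <;> simp

theorem expandHom_apply (e : ℕ) (he : 0 < e) (φ : PowerSeries k) :
    expandHom k e he φ = expandPS k e φ := rfl

theorem expandHom_X (e : ℕ) (he : 0 < e) :
    expandHom k e he PowerSeries.X = PowerSeries.X ^ e := by
  ext n
  rw [expandHom_apply, coeff_expand, PowerSeries.coeff_X_pow]
  split_ifs with h1 h2 h3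
  · obtain ⟨c, rfl⟩ := h1
    rw [Nat.mul_div_cancel_left _ he, PowerSeries.coeff_X, if_pos]
    nlinarith [h2]
  · obtain ⟨c, rfl⟩ := h1
    rw [Nat.mul_div_cancel_left _ he, PowerSeries.coeff_X, if_neg]
    intro hc; apply h2; rw [hc, Nat.mul_one]
  · exact absurd (h3 ▸ dvd_refl e) h1
  · rfl

theorem expandHom_injective (e : ℕ) (he : 0 < e) :
    Function.Injective (expandHom k e he) := by
  intro φ ψ hfg
  ext n
  have := congrArg (PowerSeries.coeff (e * n)) hfg
  rwa [expandHom_apply, expandHom_apply, coeff_expand_mul e he, coeff_expand_mul e he] at this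

/-- decomposition of a power series into its residue classes mod `e`. -/
theorem expand_decomp (e : ℕ) (he : 0 < e) (f : PowerSeries k) :
    f = ∑ j ∈ Finset.range e, (expandHom k e he
      (PowerSeries.mk fun n => PowerSeries.coeff (e * n + j) f)) * PowerSeries.X ^ j := by
  ext n
  rw [map_sum]
  rw [Finset.sum_congr rfl (fun j _ => PowerSeries.coeff_mul_X_pow' _ j n)]
  rw [Finset.sum_eq_single (n % e)]
  · rw [if_pos (Nat.mod_le n e), expandHom_apply, coeff_expand]
    have hsub : n - n % e = e * (n / e) :=
      Nat.sub_eq_of_eq_add (Nat.div_add_mod n e).symm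
    rw [hsub, if_pos ⟨n / e, rfl⟩, Nat.mul_div_cancel_left _ he, PowerSeries.coeff_mk,
      Nat.div_add_mod]
  · intro j hj hne
    rw [Finset.mem_range] at hj
    split_ifs with hjn
    · rw [expandHom_apply, coeff_expand, if_neg]
      intro ⟨t, ht⟩
      apply hne
      have hn : n = e * t + j := by omega
      rw [hn, Nat.mul_add_mod, Nat.mod_eq_of_lt hj]
    · rfl
  · intro hmem
    exact absurd (Finset.mem_range.mpr (Nat.mod_lt n he)) hmem


section Key

variable {k : Type*} [Field k]

/-- corestriction of a field hom to its range. -/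
noncomputable def toRange {K L : Type*} [Field K] [Field L] (f : K →+* L) : K →+* f.fieldRange :=
  f.codRestrict f.fieldRange.toSubring fun x => f.mem_fieldRange_self x

/-- a field hom as a ring equiv onto its range. -/
noncomputable def eqvRange {K L : Type*} [Field K] [Field L] (f : K →+* L) : K ≃+* f.fieldRange :=
  RingEquiv.ofBijective (toRange f)
    ⟨fun _ _ hab => f.injective (congrArg Subtype.val hab),
     fun ⟨_, x, hx⟩ => ⟨x, Subtype.ext hx⟩⟩

theorem eisenstein_aux (d : ℕ) (hd : 0 < d) :
    Irreducible (Polynomial.X ^ d - Polynomial.C PowerSeries.X :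
      Polynomial (PowerSeries k)) := by
  set q : Polynomial (PowerSeries k) := Polynomial.X ^ d - Polynomial.C PowerSeries.X with hq
  have hqmonic : q.Monic := by
    apply Polynomial.monic_X_pow_sub_C _ hd.ne'
  have hqdeg : q.natDegree = d := Polynomial.natDegree_X_pow_sub_C
  have heis : q.IsEisensteinAt (Ideal.span {PowerSeries.X}) := by
    constructor
    · rw [hqmonic.leadingCoeff]
      intro hmem
      rw [Ideal.mem_span_singleton] at hmem
      exact PowerSeries.X_prime.not_dvd_one hmem
    · intro n hn
      rw [hqdeg] at hn
      rw [hq, Polynomial.coeff_sub, Polynomial.coeff_X_pow, if_neg hn.ne, Polynomial.coeff_C]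
      split_ifs with h0
      · rw [zero_sub]
        exact neg_mem (Ideal.subset_span rfl)
      · simp
    · rw [hq, Polynomial.coeff_sub, Polynomial.coeff_X_pow, if_neg hd.ne,
        Polynomial.coeff_C, if_pos rfl, zero_sub]
      intro hmem
      rw [Ideal.span_singleton_pow, Ideal.mem_span_singleton] at hmem
      rw [dvd_neg] at hmem
      rw [PowerSeries.X_pow_dvd_iff] at hmem
      have := hmem 1 one_lt_two
      simp at this
  exact heis.irreducible
    ((Ideal.span_singleton_prime PowerSeries.X_ne_zero).mpr PowerSeries.X_prime)
    hqmonic.isPrimitive (hqdeg ▸ hd)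


set_option maxHeartbeats 2000000 in
set_option synthInstance.maxHeartbeats 1000000 in
theorem div_key (d : ℕ) (hd : 0 < d)
    (P A F : Polynomial (PowerSeries k)) (hPmonic : P.Monic) (hPirr : Irreducible P)
    (hAmonic : A.Monic) (hAirr : Irreducible A)
    (hdvd : A ∣ ∑ i ∈ Finset.range (P.natDegree + 1),
      Polynomial.C (expandHom k d hd (P.coeff i)) * F ^ i) :
    P.natDegree ∣ d * A.natDegree := by
  set R := PowerSeries k
  set K := FractionRing R with hK
  have halgInj : Function.Injective (algebraMap R K) := IsFractionRing.injective R K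
  set σ : R →+* R := expandHom k d hd with hσ
  have hσinj : Function.Injective ((algebraMap R K).comp σ) :=
    halgInj.comp (expandHom_injective d hd)
  set τ : K →+* K := IsFractionRing.lift hσinj with hτ
  have hτalg : ∀ r : R, τ (algebraMap R K r) = algebraMap R K (σ r) := fun r =>
    IsFractionRing.lift_algebraMap hσinj r
  set p : Polynomial K := A.map (algebraMap R K) with hp
  have hpirr : Irreducible p := (hAmonic.irreducible_iff_irreducible_map_fraction_map).mp hAirr
  have hpmonic : p.Monic := hAmonic.map _
  haveI : Fact (Irreducible p) := ⟨hpirr⟩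
  set L := AdjoinRoot p with hL
  set β : L := AdjoinRoot.root p with hβ
  set α : L := Polynomial.eval₂ ((algebraMap K L).comp (algebraMap R K)) β F with hα
  set ψ : K →+* L := (algebraMap K L).comp τ with hψ
  set PK : Polynomial K := P.map (algebraMap R K) with hPK
  have hPKirr : Irreducible PK := (hPmonic.irreducible_iff_irreducible_map_fraction_map).mp hPirr
  have hPKmonic : PK.Monic := hPmonic.map _
  set g : PowerSeries k →+* L := (algebraMap K L).comp (algebraMap R K) with hg
  -- Step 1 : `α` is a root of `PK` via `ψ`
  have hgσ : g.comp σ = ψ.comp (algebraMap R K) := by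
    ext r
    show g (σ r) = ψ (algebraMap R K r)
    simp only [hg, hψ, RingHom.comp_apply, hτalg]
  have hAroot : Polynomial.eval₂ g β A = 0 := by
    rw [hg, ← Polynomial.eval₂_map, ← hp, AdjoinRoot.algebraMap_eq, hβ, AdjoinRoot.eval₂_root]
  have hQroot : Polynomial.eval₂ g β (∑ i ∈ Finset.range (P.natDegree + 1),
      Polynomial.C (expandHom k d hd (P.coeff i)) * F ^ i) = 0 := by
    obtain ⟨S, hS⟩ := hdvd
    rw [hS, Polynomial.eval₂_mul, hAroot, zero_mul]
  have hroot : Polynomial.eval₂ ψ α PK = 0 := by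
    rw [hPK, Polynomial.eval₂_map, ← hgσ]
    rw [Polynomial.eval₂_finset_sum] at hQroot
    simp only [Polynomial.eval₂_mul, Polynomial.eval₂_C, Polynomial.eval₂_pow] at hQroot
    rw [Polynomial.eval₂_eq_sum_range]
    exact hQroot
  -- Step 2 : subfields of `L`
  have hp0 : p ≠ 0 := hpmonic.ne_zero
  set E : Subfield L := (algebraMap K L).fieldRange with hE
  have hrankE : Module.finrank E L = A.natDegree := by
    have hb : Module.Basis (Fin (AdjoinRoot.powerBasis hp0).dim) E L :=
      (AdjoinRoot.powerBasis hp0).basis.mapCoeffs (eqvRange (algebraMap K L))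
        (fun c x => by rw [Algebra.smul_def, Algebra.smul_def]; rfl)
    rw [Module.finrank_eq_card_basis hb, Fintype.card_fin]
    show p.natDegree = A.natDegree
    rw [hp, hAmonic.natDegree_map]
  have hrelE : Subfield.relfinrank E ⊤ = A.natDegree := by
    rw [Subfield.relfinrank_top_right]; exact hrankE
  set F0 : Subfield L := ψ.fieldRange with hF0
  have hF0E : F0 ≤ E := by
    rintro x hx
    obtain ⟨y, rfl⟩ := RingHom.mem_fieldRange.mp hx
    exact ⟨τ y, rfl⟩
  -- Step 4 : relfinrank F0 E = d
  set T : Subfield K := τ.fieldRange with hT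
  have hcomap : F0.comap (algebraMap K L) = T := by
    ext x
    simp only [Subfield.mem_comap, RingHom.mem_fieldRange]
    constructor
    · rintro ⟨y, hy⟩
      exact ⟨y, (algebraMap K L).injective hy⟩
    · rintro ⟨y, rfl⟩
      exact ⟨y, rfl⟩
  set ζ : K := algebraMap R K PowerSeries.X with hζ
  have hτζ : τ ζ = ζ ^ d := by
    rw [hζ, hτalg, hσ, expandHom_X d hd, map_pow]
  have hXdCirr : Irreducible (Polynomial.X ^ d - Polynomial.C ζ : Polynomial K) := by
    have h2 := eisenstein_aux (k := k) d hd
    have h3 := ((Polynomial.monic_X_pow_sub_C _ hd.ne').irreducible_iff_irreducible_map_fraction_map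
      (K := K)).mp h2
    rwa [Polynomial.map_sub, Polynomial.map_pow, Polynomial.map_X, Polynomial.map_C] at h3
  set t : ↥T := eqvRange τ ζ with htdef
  set q : Polynomial ↥T := Polynomial.X ^ d - Polynomial.C t with hqdef
  have hqirr : Irreducible q := by
    have h4 := hXdCirr.map (Polynomial.mapEquiv (eqvRange τ))
    have h5 : ((eqvRange τ : K ≃+* T) : K →+* T) = toRange τ := rfl
    rwa [Polynomial.mapEquiv_apply, Polynomial.map_sub, Polynomial.map_pow, Polynomial.map_X,
      Polynomial.map_C] at h4
  have hqmonic : q.Monic := Polynomial.monic_X_pow_sub_C _ hd.ne'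
  have hqroot : Polynomial.aeval ζ q = 0 := by
    rw [hqdef, map_sub, map_pow, Polynomial.aeval_X, Polynomial.aeval_C]
    show ζ ^ d - ((t : K)) = 0
    show ζ ^ d - τ ζ = 0
    rw [hτζ, sub_self]
  have hζint : IsIntegral (↥T) ζ := ⟨q, hqmonic, by rwa [← Polynomial.aeval_def]⟩
  have hadj : IntermediateField.adjoin ↥T {ζ} = ⊤ := by
    rw [eq_top_iff]
    rintro x -
    have hmem : ∀ f : R, algebraMap R K f ∈ IntermediateField.adjoin ↥T {ζ} := by
      intro f
      rw [expand_decomp d hd f, map_sum]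
      apply sum_mem
      intro j _
      rw [map_mul, map_pow]
      apply mul_mem
      · have h6 : algebraMap R K (expandHom k d hd
            (PowerSeries.mk fun n => PowerSeries.coeff (d * n + j) f)) =
            τ (algebraMap R K (PowerSeries.mk fun n => PowerSeries.coeff (d * n + j) f)) :=
          (hτalg _).symm
        rw [h6]
        exact IntermediateField.algebraMap_mem _
          (eqvRange τ (algebraMap R K (PowerSeries.mk fun n => PowerSeries.coeff (d * n + j) f)))
      · exact pow_mem (IntermediateField.mem_adjoin_simple_self (↥T) ζ) j
    obtain ⟨a, b, hb, hx⟩ := IsFractionRing.div_surjective (A := R) x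
    rw [← hx]
    exact div_mem (hmem a) (hmem b)
  have hTrank : Module.finrank (↥T) K = d := by
    have h5 := IntermediateField.adjoin.finrank hζint
    have h6 : minpoly (↥T) ζ = q := (minpoly.eq_of_irreducible_of_monic hqirr hqroot hqmonic).symm
    rw [h6, hqdef, Polynomial.natDegree_X_pow_sub_C] at h5
    rw [← IntermediateField.finrank_top' (F := ↥T) (E := K), ← hadj]
    exact h5
  have hstep4 : Subfield.relfinrank F0 E = d := by
    have h1 := F0.relfinrank_comap (algebraMap K L) ⊤
    rw [hcomap, Subfield.relfinrank_top_right, ← RingHom.fieldRange_eq_map] at h1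
    rw [← h1, hTrank]
  -- Step 5 : minpoly of α over F0
  have hcompψ : (algebraMap (↥F0) L).comp (toRange ψ) = ψ := RingHom.ext fun _ => rfl
  have hψroot : Polynomial.aeval α (PK.map (toRange ψ)) = 0 := by
    rw [Polynomial.aeval_def, Polynomial.eval₂_map, hcompψ]
    exact hroot
  have hPFirr : Irreducible (PK.map (toRange ψ)) := by
    have h7 := hPKirr.map (Polynomial.mapEquiv (eqvRange ψ))
    rwa [Polynomial.mapEquiv_apply] at h7
  have hPFmonic : (PK.map (toRange ψ)).Monic := hPKmonic.map _
  have hminα : minpoly (↥F0) α = PK.map (toRange ψ) :=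
    (minpoly.eq_of_irreducible_of_monic hPFirr hψroot hPFmonic).symm
  have hαint : IsIntegral (↥F0) α := ⟨PK.map (toRange ψ), hPFmonic, by rwa [← Polynomial.aeval_def]⟩
  have hFa : Module.finrank (↥F0) (IntermediateField.adjoin (↥F0) {α}) = P.natDegree := by
    rw [IntermediateField.adjoin.finrank hαint, hminα, hPKmonic.natDegree_map, hPK,
      hPmonic.natDegree_map]
  -- Step 6 : put everything together
  set Fa : Subfield L := (IntermediateField.adjoin (↥F0) {α}).toSubfield with hFadef
  have hF0Fa : F0 ≤ Fa := fun x hx =>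
    IntermediateField.algebraMap_mem (IntermediateField.adjoin (↥F0) {α}) (⟨x, hx⟩ : ↥F0)
  have hrelFa : Subfield.relfinrank F0 Fa = P.natDegree := by
    rw [Subfield.relfinrank_eq_finrank_of_le hF0Fa]
    have h8 : Subfield.extendScalars hF0Fa = IntermediateField.adjoin (↥F0) {α} := by
      apply SetLike.coe_injective
      rfl
    rw [h8]
    exact hFa
  have hchain1 : Subfield.relfinrank F0 Fa * Subfield.relfinrank Fa ⊤ =
      Subfield.relfinrank F0 ⊤ := Subfield.relfinrank_mul_relfinrank hF0Fa le_top
  have hchain2 : Subfield.relfinrank F0 E * Subfield.relfinrank E ⊤ =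
      Subfield.relfinrank F0 ⊤ := Subfield.relfinrank_mul_relfinrank hF0E le_top
  rw [hstep4, hrelE] at hchain2
  rw [hrelFa] at hchain1
  have hdvd2 : P.natDegree ∣ Subfield.relfinrank F0 ⊤ := dvd_of_mul_right_eq _ hchain1
  rwa [← hchain2] at hdvd2


end Key

end StmtNine


/-- Let `f(z,w) = (z^d, w^c + Σ_{j<c} h_j(z) w^j)` over an algebraically
closed field `k` of characteristic 0.  Let `x` be a rigid point of the Berkovich unit ball over
`k((z))` corresponding to an irreducible formal germ `C` with intersection number
`m = (C·{z=0})`, given by a monic irreducible Weierstrass polynomial `P ∈ k[[z]][w]` of degree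
`m`, and let `{y_i}_{i∈I}` be the rigid preimages of `x` under `f_⋄`, corresponding to the
branches `D_i` (with monic irreducible equations `P_i` of degrees `m_i = (D_i·{z=0})`)
appearing in the factorization `P∘f = Π_i P_i^{r_i}`.  Writing `e_i = d·m_i/m ∈ ℕ*`, one has
`Σ_{i∈I} r_i e_i = c·d`; in particular `#I ≤ c·d`. -/
theorem stmt_9 {ι : Type*} (k : Type*) [Field k] [IsAlgClosed k] [CharZero k]
    (c d : ℕ) (hc : 2 ≤ c) (hd : 2 ≤ d)
    (h : Fin c → PowerSeries k) (hh : ∀ j, PowerSeries.constantCoeff (h j) = 0)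
    (P : Polynomial (PowerSeries k)) (hPmonic : P.Monic) (hPirr : Irreducible P)
    (m : ℕ) (hm : 0 < m) (hPdeg : P.natDegree = m)
    (hPweier : ∀ i < m, PowerSeries.constantCoeff (P.coeff i) = 0)
    (F : Polynomial (PowerSeries k))
    (hF : F = Polynomial.X ^ c + ∑ j : Fin c, Polynomial.C (h j) * Polynomial.X ^ (j : ℕ))
    (Q : Polynomial (PowerSeries k))
    (hQ : Q = ∑ i ∈ Finset.range (m + 1),
      Polynomial.C (expandPS k d (P.coeff i)) * F ^ i)
    (I : Finset ι) (Pi : ι → Polynomial (PowerSeries k)) (rI : ι → ℕ)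
    (hPi : ∀ i ∈ I, (Pi i).Monic ∧ Irreducible (Pi i))
    (hPiweier : ∀ i ∈ I, ∀ n < (Pi i).natDegree, PowerSeries.constantCoeff ((Pi i).coeff n) = 0)
    (hrI : ∀ i ∈ I, 0 < rI i)
    (hdistinct : ∀ i ∈ I, ∀ j ∈ I, i ≠ j → Pi i ≠ Pi j)
    (hfact : Q = ∏ i ∈ I, Pi i ^ rI i) :
    (∀ i ∈ I, m ∣ d * (Pi i).natDegree) ∧
      (∑ i ∈ I, rI i * (d * (Pi i).natDegree / m)) = c * d ∧
      I.card ≤ c * d := by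
  have hd' : 0 < d := by omega
  have hc' : 0 < c := by omega
  set σ : PowerSeries k →+* PowerSeries k := StmtNine.expandHom k d hd' with hσ
  have hQ' : Q = ∑ i ∈ Finset.range (P.natDegree + 1),
      Polynomial.C (σ (P.coeff i)) * F ^ i := by
    rw [hQ, hPdeg]
    exact Finset.sum_congr rfl fun i _ => by rw [← StmtNine.expandHom_apply d hd', ← hσ]
  -- degree of F
  have hSdeg : (∑ j : Fin c, Polynomial.C (h j) * Polynomial.X ^ (j : ℕ)).degree
      ≤ ((c - 1 : ℕ) : WithBot ℕ) := by
    refine le_trans (Polynomial.degree_sum_le _ _) ?_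
    refine Finset.sup_le fun j _ => ?_
    refine le_trans (Polynomial.degree_C_mul_X_pow_le _ _) ?_
    exact_mod_cast Nat.cast_le.mpr (by omega : (j : ℕ) ≤ c - 1)
  have hSdeg' : (∑ j : Fin c, Polynomial.C (h j) * Polynomial.X ^ (j : ℕ)).degree
      < (c : WithBot ℕ) :=
    lt_of_le_of_lt hSdeg (by exact_mod_cast Nat.cast_lt.mpr (by omega : c - 1 < c))
  have hFmonic : F.Monic := by
    rw [hF]
    exact Polynomial.monic_X_pow_add hSdeg'
  have hFdeg : F.natDegree = c := by
    have hdeg : F.degree = (c : WithBot ℕ) := by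
      rw [hF]
      rw [Polynomial.degree_add_eq_left_of_degree_lt]
      · exact Polynomial.degree_X_pow c
      · rw [Polynomial.degree_X_pow]
        exact hSdeg'
    exact Polynomial.natDegree_eq_of_degree_eq_some hdeg
  -- Q = (P.map σ).comp F
  have hmapdeg : (P.map σ).natDegree = m := by rw [hPmonic.natDegree_map, hPdeg]
  have hQF : Q = (P.map σ).comp F := by
    rw [hQ', Polynomial.comp, Polynomial.eval₂_eq_sum_range, hPmonic.natDegree_map]
    exact Finset.sum_congr rfl fun i _ => by rw [Polynomial.coeff_map]
  have hQdeg : Q.natDegree = m * c := by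
    rw [hQF, Polynomial.natDegree_comp, hmapdeg, hFdeg]
  -- each Pi has positive degree
  have hPipos : ∀ i ∈ I, 0 < (Pi i).natDegree := by
    intro i hi
    rcases Nat.eq_zero_or_pos (Pi i).natDegree with hzero | hpos
    case inr => exact hpos
    case inl =>
      exfalso
      have h1 : Pi i = 1 := (Polynomial.Monic.natDegree_eq_zero (hPi i hi).1).mp hzero
      exact not_irreducible_one (h1 ▸ (hPi i hi).2)
  -- sum of degrees
  have hsum : ∑ i ∈ I, rI i * (Pi i).natDegree = m * c := by
    rw [← hQdeg, hfact]
    rw [Polynomial.natDegree_prod (s := I) (f := fun i => Pi i ^ rI i) (fun i hi => pow_ne_zero _ (hPi i hi).1.ne_zero)]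
    exact Finset.sum_congr rfl fun i _ => (Polynomial.natDegree_pow _ _).symm
  -- divisibility
  have hdiv : ∀ i ∈ I, m ∣ d * (Pi i).natDegree := by
    intro i hi
    have hdvdQ : Pi i ∣ Q := by
      rw [hfact]
      exact dvd_trans (dvd_pow_self _ (hrI i hi).ne')
        (Finset.dvd_prod_of_mem (fun i => Pi i ^ rI i) hi)
    have := StmtNine.div_key d hd' P (Pi i) F hPmonic hPirr (hPi i hi).1 (hPi i hi).2
      (hQ' ▸ hdvdQ)
    rwa [hPdeg] at this
  have hsum2 : (∑ i ∈ I, rI i * (d * (Pi i).natDegree / m)) = c * d := by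
    apply Nat.eq_of_mul_eq_mul_left hm
    calc m * ∑ i ∈ I, rI i * (d * (Pi i).natDegree / m)
        = ∑ i ∈ I, rI i * (d * (Pi i).natDegree) := by
          rw [Finset.mul_sum]
          refine Finset.sum_congr rfl fun i hi => ?_
          rw [Nat.mul_left_comm, Nat.mul_div_cancel' (hdiv i hi)]
      _ = d * ∑ i ∈ I, rI i * (Pi i).natDegree := by
          rw [Finset.mul_sum]
          exact Finset.sum_congr rfl fun i _ => by ring
      _ = m * (c * d) := by rw [hsum]; ring
  refine ⟨hdiv, hsum2, ?_⟩
  · have hle : I.card ≤ ∑ i ∈ I, rI i * (d * (Pi i).natDegree / m) := by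
      rw [Finset.card_eq_sum_ones]
      refine Finset.sum_le_sum fun i hi => ?_
      have h1 : 1 ≤ rI i := hrI i hi
      have h2 : 1 ≤ d * (Pi i).natDegree / m := by
        rw [Nat.one_le_div_iff hm]
        exact Nat.le_of_dvd (Nat.mul_pos hd' (hPipos i hi)) (hdiv i hi)
      calc 1 = 1 * 1 := (one_mul 1).symm
        _ ≤ rI i * (d * (Pi i).natDegree / m) := Nat.mul_le_mul h1 h2
    exact le_trans hle (le_of_eq hsum2)
end
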